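/- Value of δ1 at θ = 1/√5: let θ = 1/√5 and let λ, μ, λ1, μ1 be arbitrary real numbers. With a = (1/2)(θ²−1/3)λ, b = (1/2)(θ²−1/3)(1−λ), c = (1/2)(1−θ²)μ, d = (1/2)(1−θ²)(1−μ), a1 = −(1/4)(θ²−1/3)²(1−λ) + (5/24)(θ²−1/5)²λ1, b1 = −(5/24)(θ²−1/5)²(1−λ1), c1 = (5/24)(1−θ²)(θ²−1/5)(1−μ1), d1 = −(1/4)(1−θ²)²μ − (5/24)(1−θ²)(θ²−1/5)μ1, ρ = b + d − 1/6, and δ1 = (1/4)[2(b1+d1) − (b−d+ρ)(1/6−a−d) − d(c−a+ρ)], one has δ1 = −λ²/450 − λ/1800 − μ/30 − 41/1200; in particular δ1 is independent of λ1 and μ1. -/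
import Mathlib


noncomputable section

/-! Coefficient formulas (abcd), (abcd1) and (gamas) from the derivation of the
fifth-order KdV–BBM equation; `θ, lam, mu, lam1, mu1, ρ` are free real parameters
(`λ, μ, λ₁, μ₁` of the paper are rendered `lam, mu, lam1, mu1`). -/

def aC (θ lam : ℝ) : ℝ := (1/2) * (θ^2 - 1/3) * lam
def bC (θ lam : ℝ) : ℝ := (1/2) * (θ^2 - 1/3) * (1 - lam)
def cC (θ mu : ℝ) : ℝ := (1/2) * (1 - θ^2) * mu
def dC (θ mu : ℝ) : ℝ := (1/2) * (1 - θ^2) * (1 - mu)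
def a1C (θ lam lam1 : ℝ) : ℝ :=
  -(1/4) * (θ^2 - 1/3)^2 * (1 - lam) + (5/24) * (θ^2 - 1/5)^2 * lam1
def b1C (θ lam1 : ℝ) : ℝ := -(5/24) * (θ^2 - 1/5)^2 * (1 - lam1)
def c1C (θ mu1 : ℝ) : ℝ := (5/24) * (1 - θ^2) * (θ^2 - 1/5) * (1 - mu1)
def d1C (θ mu mu1 : ℝ) : ℝ :=
  -(1/4) * (1 - θ^2)^2 * mu - (5/24) * (1 - θ^2) * (θ^2 - 1/5) * mu1

def γ1C (θ lam mu ρ : ℝ) : ℝ := (1/2) * (bC θ lam + dC θ mu - ρ)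
def γ2C (θ lam mu ρ : ℝ) : ℝ := (1/2) * (aC θ lam + cC θ mu + ρ)
def δ1C (θ lam mu lam1 mu1 ρ : ℝ) : ℝ :=
  (1/4) * (2 * (b1C θ lam1 + d1C θ mu mu1)
    - (bC θ lam - dC θ mu + ρ) * (1/6 - aC θ lam - dC θ mu)
    - dC θ mu * (cC θ mu - aC θ lam + ρ))
def δ2C (θ lam mu lam1 mu1 ρ : ℝ) : ℝ :=
  (1/4) * (2 * (a1C θ lam lam1 + c1C θ mu1)
    - (cC θ mu - aC θ lam + ρ) * (1/6 - aC θ lam) + ρ/3)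
def γC (θ lam mu ρ : ℝ) : ℝ := (1/24) * (5 - 9 * (bC θ lam + dC θ mu) + 9 * ρ)

/-- **Value of δ₁ at θ = 1/√5**: with `ρ = b + d − 1/6`,
`δ1 = −λ²/450 − λ/1800 − μ/30 − 41/1200`; in particular `δ1` does not depend on
`λ₁, μ₁`. -/
theorem delta1_at_theta_inv_sqrt5 (lam mu lam1 mu1 : ℝ) :
    δ1C (1 / Real.sqrt 5) lam mu lam1 mu1
        (bC (1 / Real.sqrt 5) lam + dC (1 / Real.sqrt 5) mu - 1/6) =
      -lam^2 / 450 - lam / 1800 - mu / 30 - 41/1200 := by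
  have h : (1 / Real.sqrt 5 : ℝ)^2 = 1/5 := by
    rw [div_pow, one_pow, Real.sq_sqrt (by norm_num : (5:ℝ) ≥ 0)]
  simp only [δ1C, b1C, d1C, bC, dC, aC, cC, h]
  ring
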